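/- Let W̃ and Ŵ be n×n real symmetric positive semidefinite matrices with rank(W̃) = R and rank(Ŵ) = R + 1. Then there exists ε* > 0 such that for every ε with 0 < ε < ε*, trace((Ŵ + εI)⁻¹) < trace((W̃ + εI)⁻¹). -/

import Mathlib

/-!
In an eigenbasis, `trace ((W + ε I)⁻¹) = ∑ᵢ (λᵢ + ε)⁻¹`. For positive semidefinite `W` each of the
`n - rank W` zero eigenvalues contributes `ε⁻¹`, while the positive ones contribute at most
`∑ λᵢ⁻¹` in total, independently of `ε`. Raising the rank by one therefore lowers the trace by at
least `ε⁻¹ - ∑ λᵢ(Ŵ)⁻¹`, which is positive for small `ε`.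
-/

open Finset

section EigenvalueSums

variable {ι : Type*} [Fintype ι] {l : ι → ℝ} {ε : ℝ}

lemma card_eq_zero_mul_inv_le_sum_inv_add (hl : ∀ i, 0 ≤ l i) (hε : 0 ≤ ε) :
    #{i | l i = 0} * ε⁻¹ ≤ ∑ i, (l i + ε)⁻¹ :=
  calc (#{i | l i = 0} : ℝ) * ε⁻¹ = ∑ i ∈ {i | l i = 0}, (l i + ε)⁻¹ := by
        rw [sum_congr rfl fun i hi => by rw [(mem_filter.1 hi).2, zero_add], sum_const,
          nsmul_eq_mul]
    _ ≤ ∑ i, (l i + ε)⁻¹ :=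
        sum_le_sum_of_subset_of_nonneg (filter_subset _ _) fun i _ _ => by
          have := hl i
          positivity

lemma sum_inv_add_le_card_eq_zero_mul_inv_add (hl : ∀ i, 0 ≤ l i) (hε : 0 ≤ ε) :
    ∑ i, (l i + ε)⁻¹ ≤ #{i | l i = 0} * ε⁻¹ + ∑ i, (l i)⁻¹ :=
  calc ∑ i, (l i + ε)⁻¹ ≤ ∑ i, ((if l i = 0 then ε⁻¹ else 0) + (l i)⁻¹) := by
        refine sum_le_sum fun i _ => ?_
        rcases (hl i).eq_or_lt with hzero | hpos
        · simp [← hzero]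
        · simpa [hpos.ne'] using inv_anti₀ hpos (le_add_of_nonneg_right hε)
    _ = #{i | l i = 0} * ε⁻¹ + ∑ i, (l i)⁻¹ := by
        rw [sum_add_distrib, ← sum_filter, sum_const, nsmul_eq_mul]

end EigenvalueSums

namespace Matrix

variable {ι : Type*} [Fintype ι] [DecidableEq ι] {A B : Matrix ι ι ℝ}

namespace IsHermitian

lemma trace_cfc (hA : A.IsHermitian) (f : ℝ → ℝ) :
    (cfc f A).trace = ∑ i, f (hA.eigenvalues i) := by
  rw [hA.cfc_eq, IsHermitian.cfc, Unitary.conjStarAlgAut_apply, trace_mul_cycle,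
    Unitary.coe_star_mul_self, one_mul, trace_diagonal]
  rfl

lemma inv_add_smul_one_eq_cfc (hA : A.IsHermitian) {c : ℝ}
    (hc : ∀ i, hA.eigenvalues i + c ≠ 0) :
    (A + c • 1)⁻¹ = cfc (fun x => (x + c)⁻¹) A := by
  rw [cfc_inv (· + c) A, cfc_add_const c (fun x => x) A, cfc_id' ℝ A,
    Algebra.algebraMap_eq_smul_one, nonsing_inv_eq_ringInverse]
  rw [hA.spectrum_real_eq_range_eigenvalues]
  rintro _ ⟨i, rfl⟩
  exact hc i

lemma trace_inv_add_smul_one (hA : A.IsHermitian) {c : ℝ}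
    (hc : ∀ i, hA.eigenvalues i + c ≠ 0) :
    (A + c • 1)⁻¹.trace = ∑ i, (hA.eigenvalues i + c)⁻¹ := by
  rw [hA.inv_add_smul_one_eq_cfc hc, hA.trace_cfc]

lemma card_eigenvalues_eq_zero_add_rank (hA : A.IsHermitian) :
    #{i | hA.eigenvalues i = 0} + A.rank = Fintype.card ι := by
  rw [hA.rank_eq_card_non_zero_eigs, Fintype.card_subtype]
  exact card_filter_add_card_filter_not _

end IsHermitian

lemma PosSemidef.trace_inv_add_smul_one (hA : A.PosSemidef) {ε : ℝ} (hε : 0 < ε) :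
    (A + ε • 1)⁻¹.trace = ∑ i, (hA.1.eigenvalues i + ε)⁻¹ :=
  hA.1.trace_inv_add_smul_one fun i => (add_pos_of_nonneg_of_pos (hA.eigenvalues_nonneg i) hε).ne'

/-- `∑ i, (hB.1.eigenvalues i)⁻¹` is the trace of the pseudo-inverse of `B`, since `0⁻¹ = 0`. -/
lemma PosSemidef.trace_inv_add_smul_one_add_inv_le_of_rank_eq_add_one (hA : A.PosSemidef)
    (hB : B.PosSemidef) (hrank : B.rank = A.rank + 1) {ε : ℝ} (hε : 0 < ε) :
    (B + ε • 1)⁻¹.trace + ε⁻¹ ≤ (A + ε • 1)⁻¹.trace + ∑ i, (hB.1.eigenvalues i)⁻¹ := by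
  have hzeros : (#{i | hA.1.eigenvalues i = 0} : ℝ) = #{i | hB.1.eigenvalues i = 0} + 1 := by
    have := hA.1.card_eigenvalues_eq_zero_add_rank
    have := hB.1.card_eigenvalues_eq_zero_add_rank
    norm_cast
    omega
  have hlower := card_eq_zero_mul_inv_le_sum_inv_add hA.eigenvalues_nonneg hε.le
  have hupper := sum_inv_add_le_card_eq_zero_mul_inv_add hB.eigenvalues_nonneg hε.le
  rw [hzeros] at hlower
  rw [hA.trace_inv_add_smul_one hε, hB.trace_inv_add_smul_one hε]
  linarith

end Matrix

theorem stmt_7 {n : ℕ} (Wt Wh : Matrix (Fin n) (Fin n) ℝ)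
    (hWt : Wt.PosSemidef) (hWh : Wh.PosSemidef) (R : ℕ)
    (hrt : Wt.rank = R) (hrh : Wh.rank = R + 1) :
    ∃ εstar > (0 : ℝ), ∀ ε : ℝ, 0 < ε → ε < εstar →
      ((Wh + ε • (1 : Matrix (Fin n) (Fin n) ℝ))⁻¹).trace
        < ((Wt + ε • (1 : Matrix (Fin n) (Fin n) ℝ))⁻¹).trace := by
  set C := ∑ i, (hWh.1.eigenvalues i)⁻¹
  have hC : 0 ≤ C := sum_nonneg fun i _ => inv_nonneg.2 (hWh.eigenvalues_nonneg i)
  refine ⟨(C + 1)⁻¹, by positivity, fun ε hε hεlt => ?_⟩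
  have hCε : C + 1 < ε⁻¹ := (lt_inv_comm₀ hε (by positivity)).1 hεlt
  have := hWt.trace_inv_add_smul_one_add_inv_le_of_rank_eq_add_one hWh
    (by rw [hrh, hrt]) hε
  linarith
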